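/- Let S be the set of tuples (g_1,...,g_r) ∈ F_q[T]^r such that for every monic irreducible polynomial l in a fixed finite set S_0 of monic irreducibles, v_l(g_r) = 0 or v_l(g_r) ≥ p. Then the density of S (with respect to the height ordering by max degree < X among tuples with g_r ≠ 0) equals ∏_{l ∈ S_0} (1 - 1/q_l + 1/q_l^p), where q_l = q^{deg l}. -/

import Mathlib

/-!
The condition on `g_r` only depends on `g_r` modulo `M = ∏_{l ∈ S_0} l ^ p`, so for `X ≥ deg M`
the admissible `g_r` of degree `< X` are the admissible residues modulo `M`, each repeated
`q ^ (X - deg M)` times. By the Chinese remainder theorem the admissible residues modulo `M` are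
counted by a product over `l ∈ S_0`, and modulo `l ^ p` they are the units together with `0`:
`q_l ^ p - q_l ^ (p - 1) + 1` of the `q_l ^ p` residues. The other `r - 1` coordinates are free,
and excluding `g_r = 0` costs a single polynomial, which is negligible in the limit.
-/

open Filter Topology

theorem Nat.card_subtype_forall_and {ι α : Type*} [Fintype ι] [DecidableEq ι] (i : ι)
    (P R : α → Prop) :
    Nat.card {g : ι → α // (∀ j, P (g j)) ∧ R (g i)} =
      {a | P a ∧ R a}.ncard * {a | P a}.ncard ^ (Fintype.card ι - 1) := by
  have hsplit : ∀ g : ι → α,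
      ((∀ j, P (g j)) ∧ R (g i)) ↔ (P (g i) ∧ R (g i)) ∧ ∀ j : {j // j ≠ i}, P (g j) := by
    refine fun g => ⟨fun h => ⟨⟨h.1 i, h.2⟩, fun j => h.1 j⟩, ?_⟩
    rintro ⟨⟨hi, hR⟩, hP⟩
    refine ⟨fun j => ?_, hR⟩
    by_cases hj : j = i
    · exact hj ▸ hi
    · exact hP ⟨j, hj⟩
  have e : {g : ι → α // (∀ j, P (g j)) ∧ R (g i)} ≃
      {a // P a ∧ R a} × ({j // j ≠ i} → {a // P a}) :=
    ((Equiv.funSplitAt i α).subtypeEquiv hsplit).trans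
      (Equiv.subtypeProdEquivProd.trans
        ((Equiv.refl {a // P a ∧ R a}).prodCongr
          (Equiv.subtypePiEquivPi (α := {j // j ≠ i}) (β := fun _ => α) (p := fun _ => P))))
  rw [Nat.card_congr e, Nat.card_prod, Nat.card_fun]
  simp only [← Nat.card_coe_set_eq, Set.coe_ofPred]
  simp [Nat.card_eq_fintype_card, Fintype.card_subtype_compl]

theorem tendsto_mul_pow_sub_one_div_pow_sub_one {q : ℝ} (hq : 1 < q) (c : ℝ) :
    Tendsto (fun X : ℕ => (c * q ^ X - 1) / (q ^ X - 1)) atTop (𝓝 c) := by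
  have hpow : Tendsto (fun X : ℕ => q ^ X - 1) atTop atTop :=
    tendsto_atTop_add_const_right _ _ (tendsto_pow_atTop_atTop_of_one_lt hq)
  have h := (tendsto_const_nhds (x := c - 1)).div_atTop hpow
  -- `(c * q ^ X - 1) / (q ^ X - 1) = c + (c - 1) / (q ^ X - 1)`
  rw [← add_zero c]
  refine (tendsto_const_nhds.add h).congr' ?_
  filter_upwards [eventually_ge_atTop 1] with X hX
  have : q ^ X - 1 ≠ 0 := sub_ne_zero.mpr (one_lt_pow₀ hq (by omega)).ne'
  field_simp
  ring

namespace Polynomial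

open Function

section CommRing

variable {R : Type*} [CommRing R] {M m₁ m₂ : R[X]}

theorem Monic.degree_mul_lt_add (hM : M.Monic) {h : R[X]} {n : ℕ} (hh : h.degree < n) :
    (M * h).degree < (M.natDegree + n : ℕ) := by
  nontriviality R
  rw [mul_comm, hM.degree_mul, degree_eq_natDegree hM.ne_zero, Nat.cast_add, add_comm]
  exact WithBot.add_lt_add_left WithBot.coe_ne_bot hh

theorem Monic.degree_divByMonic_lt_of_lt_add (hM : M.Monic) {a : R[X]} {n : ℕ}
    (ha : a.degree < (M.natDegree + n : ℕ)) : (a /ₘ M).degree < n := by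
  nontriviality R
  rcases eq_or_ne (a /ₘ M) 0 with h0 | h0
  · simp [h0]
  have hMa : M.degree ≤ a.degree := not_lt.mp ((divByMonic_eq_zero_iff hM).not.mp h0)
  have ha0 : a ≠ 0 := fun h => h0 (by simp [h])
  rw [degree_eq_natDegree h0, natDegree_divByMonic _ hM, Nat.cast_lt]
  rw [degree_eq_natDegree ha0, Nat.cast_lt] at ha
  rw [degree_eq_natDegree ha0, degree_eq_natDegree hM.ne_zero, Nat.cast_le] at hMa
  omega

theorem modByMonic_eq_modByMonic_iff (hM : M.Monic) {a b : R[X]} :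
    a %ₘ M = b %ₘ M ↔ M ∣ a - b := by
  rw [← sub_eq_zero, ← sub_modByMonic, modByMonic_eq_zero_iff_dvd hM]

variable [Nontrivial R]

theorem bijOn_add_mul_degree_lt (hM : M.Monic) {Q : R[X] → Prop}
    (hQ : ∀ a b, M ∣ a - b → (Q a ↔ Q b)) (n : ℕ) :
    Set.BijOn (fun x : R[X] × R[X] => x.1 + M * x.2)
      ({u | u.degree < M.degree ∧ Q u} ×ˢ {h : R[X] | h.degree < n})
      {a | a.degree < (M.natDegree + n : ℕ) ∧ Q a} := by
  have hdivmod : ∀ x ∈ {u | u.degree < M.degree ∧ Q u} ×ˢ {h : R[X] | h.degree < n},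
      (x.1 + M * x.2) /ₘ M = x.2 ∧ (x.1 + M * x.2) %ₘ M = x.1 := fun x hx =>
    div_modByMonic_unique _ _ hM ⟨rfl, hx.1.1⟩
  refine ⟨fun x hx => ⟨?_, ?_⟩, fun x hx y hy hxy => ?_, fun a ha => ?_⟩
  · refine (degree_add_le _ _).trans_lt
      (max_lt (hx.1.1.trans_le ?_) (hM.degree_mul_lt_add hx.2))
    rw [degree_eq_natDegree hM.ne_zero]
    exact_mod_cast Nat.le_add_right _ _
  · exact (hQ _ _ ⟨-x.2, by ring⟩).mp hx.1.2
  · have hx' := hdivmod x hx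
    simp only at hxy
    rw [hxy] at hx'
    exact Prod.ext (hx'.2.symm.trans (hdivmod y hy).2) (hx'.1.symm.trans (hdivmod y hy).1)
  · exact ⟨(a %ₘ M, a /ₘ M), ⟨⟨degree_modByMonic_lt _ hM,
      (hQ _ _ (dvd_modByMonic_sub a M)).mpr ha.2⟩, hM.degree_divByMonic_lt_of_lt_add ha.1⟩,
      modByMonic_add_div a M⟩

theorem eq_of_modByMonic_eq_of_isCoprime (h₁ : m₁.Monic) (h₂ : m₂.Monic)
    (hcop : IsCoprime m₁ m₂) {a b : R[X]} (ha : a.degree < (m₁ * m₂).degree)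
    (hb : b.degree < (m₁ * m₂).degree) (e₁ : a %ₘ m₁ = b %ₘ m₁) (e₂ : a %ₘ m₂ = b %ₘ m₂) :
    a = b := by
  rw [modByMonic_eq_modByMonic_iff h₁] at e₁
  rw [modByMonic_eq_modByMonic_iff h₂] at e₂
  have hdeg : (a - b).degree < (m₁ * m₂).degree := (degree_sub_le a b).trans_lt (max_lt ha hb)
  rw [← sub_eq_zero, ← (modByMonic_eq_self_iff (h₁.mul h₂)).mpr hdeg,
    modByMonic_eq_zero_iff_dvd (h₁.mul h₂)]
  exact hcop.mul_dvd e₁ e₂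

theorem exists_degree_lt_modByMonic_eq_of_isCoprime (h₁ : m₁.Monic) (h₂ : m₂.Monic)
    (hcop : IsCoprime m₁ m₂) (u v : R[X]) :
    ∃ a : R[X], a.degree < (m₁ * m₂).degree ∧ a %ₘ m₁ = u %ₘ m₁ ∧ a %ₘ m₂ = v %ₘ m₂ := by
  obtain ⟨c, d, hcd⟩ := hcop
  set w := u * (d * m₂) + v * (c * m₁)
  have hw : m₁ * m₂ ∣ w %ₘ (m₁ * m₂) - w := dvd_modByMonic_sub w _
  refine ⟨w %ₘ (m₁ * m₂), degree_modByMonic_lt _ (h₁.mul h₂), ?_, ?_⟩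
  · rw [modByMonic_eq_modByMonic_iff h₁]
    obtain ⟨k, hk⟩ := hw
    exact ⟨m₂ * k + (v - u) * c, by linear_combination hk + u * hcd⟩
  · rw [modByMonic_eq_modByMonic_iff h₂]
    obtain ⟨k, hk⟩ := hw
    exact ⟨m₁ * k + (u - v) * d, by linear_combination hk + v * hcd⟩

theorem bijOn_modByMonic_prod (h₁ : m₁.Monic) (h₂ : m₂.Monic) (hcop : IsCoprime m₁ m₂)
    {Q₁ Q₂ : R[X] → Prop} (hQ₁ : ∀ a b, m₁ ∣ a - b → (Q₁ a ↔ Q₁ b))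
    (hQ₂ : ∀ a b, m₂ ∣ a - b → (Q₂ a ↔ Q₂ b)) :
    Set.BijOn (fun a => (a %ₘ m₁, a %ₘ m₂)) {a | a.degree < (m₁ * m₂).degree ∧ Q₁ a ∧ Q₂ a}
      ({u | u.degree < m₁.degree ∧ Q₁ u} ×ˢ {v | v.degree < m₂.degree ∧ Q₂ v}) := by
  refine ⟨fun a ha => ⟨⟨degree_modByMonic_lt _ h₁, (hQ₁ _ _ (dvd_modByMonic_sub a m₁)).mpr ha.2.1⟩,
      ⟨degree_modByMonic_lt _ h₂, (hQ₂ _ _ (dvd_modByMonic_sub a m₂)).mpr ha.2.2⟩⟩,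
    fun a ha b hb hab => eq_of_modByMonic_eq_of_isCoprime h₁ h₂ hcop ha.1 hb.1
      (congrArg Prod.fst hab) (congrArg Prod.snd hab), fun x hx => ?_⟩
  obtain ⟨a, ha, e₁, e₂⟩ := exists_degree_lt_modByMonic_eq_of_isCoprime h₁ h₂ hcop x.1 x.2
  refine ⟨a, ⟨ha, (hQ₁ _ _ ((modByMonic_eq_modByMonic_iff h₁).mp e₁)).mpr hx.1.2,
    (hQ₂ _ _ ((modByMonic_eq_modByMonic_iff h₂).mp e₂)).mpr hx.2.2⟩, Prod.ext ?_ ?_⟩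
  · exact e₁.trans ((modByMonic_eq_self_iff h₁).mpr hx.1.1)
  · exact e₂.trans ((modByMonic_eq_self_iff h₂).mpr hx.2.1)

theorem ncard_degree_lt_mul_and (h₁ : m₁.Monic) (h₂ : m₂.Monic) (hcop : IsCoprime m₁ m₂)
    {Q₁ Q₂ : R[X] → Prop} (hQ₁ : ∀ a b, m₁ ∣ a - b → (Q₁ a ↔ Q₁ b))
    (hQ₂ : ∀ a b, m₂ ∣ a - b → (Q₂ a ↔ Q₂ b)) :
    {a | a.degree < (m₁ * m₂).degree ∧ Q₁ a ∧ Q₂ a}.ncard =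
      {u | u.degree < m₁.degree ∧ Q₁ u}.ncard * {v | v.degree < m₂.degree ∧ Q₂ v}.ncard := by
  rw [(bijOn_modByMonic_prod h₁ h₂ hcop hQ₁ hQ₂).ncard_eq, Set.ncard_prod]

theorem ncard_degree_lt_prod_and {ι : Type*} (s : Finset ι) {m : ι → R[X]}
    (hm : ∀ i ∈ s, (m i).Monic) (hcop : (s : Set ι).Pairwise (IsCoprime on m))
    {Q : ι → R[X] → Prop} (hQ : ∀ i ∈ s, ∀ a b, m i ∣ a - b → (Q i a ↔ Q i b)) :
    {a | a.degree < (∏ i ∈ s, m i).degree ∧ ∀ i ∈ s, Q i a}.ncard =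
      ∏ i ∈ s, {u | u.degree < (m i).degree ∧ Q i u}.ncard := by
  classical
  induction s using Finset.induction_on with
  | empty =>
    simp only [Finset.prod_empty, degree_one, Finset.notMem_empty, IsEmpty.forall_iff,
      implies_true, and_true]
    exact Set.ncard_eq_one.mpr ⟨0, by ext a; simp [Nat.WithBot.lt_zero_iff]⟩
  | insert j s hj ih =>
    simp only [Finset.mem_insert, forall_eq_or_imp] at hm hQ ⊢
    rw [Finset.prod_insert hj, Finset.prod_insert hj, ← ih hm.2 (hcop.mono (by simp)) hQ.2]
    refine ncard_degree_lt_mul_and hm.1 (monic_prod_of_monic _ _ hm.2)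
      (IsCoprime.prod_right fun i hi => hcop (by simp) (by simp [hi]) (by rintro rfl; exact hj hi))
      hQ.1 fun a b hab => forall₂_congr fun i hi =>
        hQ.2 i hi a b ((Finset.dvd_prod_of_mem m hi).trans hab)

end CommRing

section Field

variable {K : Type*} [Field K]

theorem isCoprime_of_monic_of_irreducible_of_ne {l l' : K[X]} (hl : l.Monic) (hl' : l'.Monic)
    (hirr : Irreducible l) (hirr' : Irreducible l') (hne : l ≠ l') : IsCoprime l l' :=
  (hirr.coprime_iff_not_dvd).mpr fun h =>
    hne (eq_of_monic_of_associated hl hl' (hirr.associated_of_dvd hirr' h))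

theorem setOf_degree_lt_not_dvd_or_dvd_eq_insert {l m : K[X]} (hm : m ≠ 0) :
    {u | u.degree < m.degree ∧ (¬ l ∣ u ∨ m ∣ u)} =
      insert 0 ({u | u.degree < m.degree} \ {u | u.degree < m.degree ∧ l ∣ u}) := by
  ext u
  simp only [Set.mem_ofPred_eq, Set.mem_insert_iff, Set.mem_sdiff, not_and]
  constructor
  · rintro ⟨hu, h | h⟩
    · exact Or.inr ⟨hu, fun _ => h⟩
    · exact Or.inl (eq_zero_of_dvd_of_degree_lt h hu)
  · rintro (rfl | ⟨hu, h⟩)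
    · exact ⟨by simpa [bot_lt_iff_ne_bot] using hm, Or.inr (dvd_zero _)⟩
    · exact ⟨hu, Or.inl (h hu)⟩

end Field

section FiniteField

variable {K : Type*} [Field K] [Fintype K] {M : K[X]}

local notation "q" => Fintype.card K

theorem ncard_degree_lt (n : ℕ) : {a : K[X] | a.degree < n}.ncard = q ^ n := by
  rw [← Nat.card_coe_set_eq, Set.coe_ofPred, Nat.card_congr ((Equiv.subtypeEquivRight fun _ =>
    mem_degreeLT.symm).trans (degreeLTEquiv K n).toEquiv)]
  simp

theorem finite_setOf_degree_lt (n : ℕ) : {a : K[X] | a.degree < n}.Finite :=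
  Set.finite_of_ncard_pos (by rw [ncard_degree_lt]; exact pow_pos Fintype.card_pos _)

theorem ncard_degree_lt_add_and (hM : M.Monic) {Q : K[X] → Prop}
    (hQ : ∀ a b, M ∣ a - b → (Q a ↔ Q b)) (n : ℕ) :
    {a : K[X] | a.degree < (M.natDegree + n : ℕ) ∧ Q a}.ncard =
      {u | u.degree < M.degree ∧ Q u}.ncard * q ^ n := by
  rw [← (bijOn_add_mul_degree_lt hM hQ n).ncard_eq, Set.ncard_prod, ncard_degree_lt]

theorem ncard_degree_lt_and_ne_zero_add_one {Q : K[X] → Prop} (hQ : Q 0) (X : ℕ) :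
    {a : K[X] | a.degree < X ∧ a ≠ 0 ∧ Q a}.ncard + 1 = {a : K[X] | a.degree < X ∧ Q a}.ncard := by
  have hsdiff :
      {a : K[X] | a.degree < X ∧ a ≠ 0 ∧ Q a} = {a : K[X] | a.degree < X ∧ Q a} \ {0} := by
    ext a
    simp only [Set.mem_ofPred_eq, Set.mem_sdiff, Set.mem_singleton_iff]
    tauto
  have hzero : (0 : K[X]) ∈ {a : K[X] | a.degree < X ∧ Q a} := ⟨by simp, hQ⟩
  rw [hsdiff, Set.ncard_sdiff_singleton_add_one hzero
    ((finite_setOf_degree_lt X).subset fun a ha => ha.1)]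

theorem ncard_degree_lt_not_dvd_or_pow_dvd_add {l : K[X]} (hl : l.Monic) {p : ℕ} (hp : 0 < p) :
    {u | u.degree < (l ^ p).degree ∧ (¬ l ∣ u ∨ l ^ p ∣ u)}.ncard + q ^ ((p - 1) * l.natDegree) =
      q ^ (p * l.natDegree) + 1 := by
  obtain ⟨k, rfl⟩ : ∃ k, p = k + 1 := ⟨p - 1, by omega⟩
  have hdeg : (l ^ (k + 1)).degree = ↑(l.natDegree + k * l.natDegree) := by
    rw [degree_eq_natDegree (hl.pow _).ne_zero, natDegree_pow, add_one_mul, add_comm]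
  have hmultiples : {u : K[X] | u.degree < (l ^ (k + 1)).degree ∧ l ∣ u}.ncard =
      q ^ (k * l.natDegree) := by
    have hzero : {u : K[X] | u.degree < l.degree ∧ l ∣ u} = {0} := by
      ext u
      refine ⟨fun h => eq_zero_of_dvd_of_degree_lt h.2 h.1, ?_⟩
      rintro rfl
      simp [bot_lt_iff_ne_bot, hl.ne_zero]
    rw [hdeg, ncard_degree_lt_add_and hl (fun a b h => dvd_iff_dvd_of_dvd_sub h), hzero,
      Set.ncard_singleton, one_mul]
  have hfin : {u : K[X] | u.degree < (l ^ (k + 1)).degree}.Finite :=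
    hdeg ▸ finite_setOf_degree_lt _
  have hzero : (0 : K[X]) ∉ {u : K[X] | u.degree < (l ^ (k + 1)).degree} \
      {u | u.degree < (l ^ (k + 1)).degree ∧ l ∣ u} := fun h => h.2 ⟨h.1, dvd_zero l⟩
  rw [setOf_degree_lt_not_dvd_or_dvd_eq_insert (hl.pow _).ne_zero,
    Set.ncard_insert_of_notMem hzero hfin.sdiff, add_right_comm, add_tsub_cancel_right,
    ← hmultiples, Set.ncard_sdiff_add_ncard_of_subset (fun u hu => hu.1) hfin, hdeg,
    ncard_degree_lt]
  ring

theorem ncard_degree_lt_not_dvd_or_pow_dvd {l : K[X]} (hl : l.Monic) {p : ℕ} (hp : 0 < p) :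
    ({u | u.degree < (l ^ p).degree ∧ (¬ l ∣ u ∨ l ^ p ∣ u)}.ncard : ℝ) =
      (q : ℝ) ^ (p * l.natDegree) *
        (1 - 1 / (q : ℝ) ^ l.natDegree + 1 / (q : ℝ) ^ (p * l.natDegree)) := by
  have h := congrArg (Nat.cast : ℕ → ℝ) (ncard_degree_lt_not_dvd_or_pow_dvd_add hl hp)
  obtain ⟨k, rfl⟩ : ∃ k, p = k + 1 := ⟨p - 1, by omega⟩
  push_cast at h
  rw [add_one_mul, pow_add (q : ℝ)] at h ⊢
  have : (q : ℝ) ≠ 0 := by positivity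
  field_simp
  linear_combination h

theorem ncard_degree_lt_forall_not_dvd_or_pow_dvd {S : Finset K[X]}
    (hS : ∀ l ∈ S, l.Monic ∧ Irreducible l) {p : ℕ} (hp : 0 < p) {X : ℕ}
    (hX : (∏ l ∈ S, l ^ p).natDegree ≤ X) :
    ({a : K[X] | a.degree < X ∧ ∀ l ∈ S, ¬ l ∣ a ∨ l ^ p ∣ a}.ncard : ℝ) =
      (∏ l ∈ S, (1 - 1 / (q : ℝ) ^ l.natDegree + 1 / (q : ℝ) ^ (p * l.natDegree))) *
        (q : ℝ) ^ X := by
  have hcongr : ∀ l ∈ S, ∀ a b : K[X], l ^ p ∣ a - b →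
      ((¬ l ∣ a ∨ l ^ p ∣ a) ↔ (¬ l ∣ b ∨ l ^ p ∣ b)) := fun l _ a b h => by
    rw [dvd_iff_dvd_of_dvd_sub ((dvd_pow_self l hp.ne').trans h), dvd_iff_dvd_of_dvd_sub h]
  have hmonic : ∀ l ∈ S, (l ^ p).Monic := fun l hl => (hS l hl).1.pow p
  have hcop : (S : Set K[X]).Pairwise (IsCoprime on (· ^ p)) := fun l hl l' hl' hne =>
    (isCoprime_of_monic_of_irreducible_of_ne (hS l hl).1 (hS l' hl').1 (hS l hl).2
      (hS l' hl').2 hne).pow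
  obtain ⟨n, rfl⟩ := Nat.exists_eq_add_of_le hX
  rw [ncard_degree_lt_add_and (monic_prod_of_monic _ _ hmonic) (fun a b hab => forall₂_congr
      fun l hl => hcongr l hl a b ((Finset.dvd_prod_of_mem (· ^ p) hl).trans hab)) n,
    ncard_degree_lt_prod_and S hmonic hcop hcongr, natDegree_prod_of_monic _ _ hmonic]
  push_cast
  rw [Finset.prod_congr rfl fun l hl => ncard_degree_lt_not_dvd_or_pow_dvd (hS l hl).1 hp,
    Finset.prod_mul_distrib, pow_add, Finset.prod_pow_eq_pow_sum]
  simp only [natDegree_pow]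
  ring

end FiniteField

end Polynomial

open Polynomial

/-- Let S_0 be a fixed finite set of monic irreducibles of F_q[T] and let S
be the set of tuples (g_1,...,g_r) with g_r ≠ 0 such that for every l ∈ S_0 one has
v_l(g_r) = 0 (i.e. l ∤ g_r) or v_l(g_r) ≥ p (i.e. l^p ∣ g_r). Then the density of S equals
∏_{l ∈ S_0} (1 - 1/q_l + 1/q_l^p) with q_l = q^{deg l}. -/
theorem stmt_11 (p : ℕ) (hp : p.Prime) (q : ℕ)
    (Fq : Type) [Field Fq] [Fintype Fq] (hcard : Fintype.card Fq = q)
    (r : ℕ) (hr : 2 ≤ r)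
    (S0 : Finset (Polynomial Fq)) (hS0 : ∀ l ∈ S0, l.Monic ∧ Irreducible l) :
    Filter.Tendsto
      (fun X : ℕ =>
        (Nat.card {g : Fin r → Polynomial Fq //
            g ⟨r - 1, by omega⟩ ≠ 0 ∧ (∀ i, (g i).degree < (X : ℕ)) ∧
            ∀ l ∈ S0, ¬ l ∣ g ⟨r - 1, by omega⟩ ∨ l ^ p ∣ g ⟨r - 1, by omega⟩} : ℝ) /
          ((q : ℝ) ^ (r * X) - (q : ℝ) ^ ((r - 1) * X)))
      Filter.atTop
      (nhds (∏ l ∈ S0,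
        ((1 : ℝ) - 1 / (q : ℝ) ^ l.natDegree + 1 / (q : ℝ) ^ (p * l.natDegree)))) := by
  subst hcard
  have hq : (1 : ℝ) < Fintype.card Fq := by exact_mod_cast Fintype.one_lt_card
  refine (tendsto_mul_pow_sub_one_div_pow_sub_one hq _).congr' ?_
  filter_upwards [eventually_ge_atTop (∏ l ∈ S0, l ^ p).natDegree] with X hX
  rw [← ncard_degree_lt_forall_not_dvd_or_pow_dvd hS0 hp.pos hX,
    ← ncard_degree_lt_and_ne_zero_add_one (fun l _ => Or.inr (dvd_zero _)) X,
    Nat.card_congr (Equiv.subtypeEquivRight fun g => and_left_comm),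
    Nat.card_subtype_forall_and (⟨r - 1, by omega⟩ : Fin r) (fun a : Fq[X] => a.degree < X)
      (fun a => a ≠ 0 ∧ ∀ l ∈ S0, ¬ l ∣ a ∨ l ^ p ∣ a),
    ncard_degree_lt, Fintype.card_fin]
  have hrX : r * X = (r - 1) * X + X := by rw [← add_one_mul, Nat.sub_add_cancel (by omega)]
  push_cast
  rw [add_sub_cancel_right, hrX, pow_add, ← pow_mul, mul_comm X, ← mul_sub_one,
    mul_comm (_ ^ ((r - 1) * X)), mul_div_mul_right _ _ (by positivity)]
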